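/- Let {ψ_j}_{j∈ℕ} be a frame for closed subspace S with bounds c₁, c₂, and suppose T and S^⊥ satisfy the subspace condition. Then the consistent reconstruction map F = P_{T S^⊥} (mapping f ∈ H₀ = T ⊕ S^⊥ to the unique element of T with the same samples ⟨·, ψ_j⟩) has condition number κ(F) = sup{‖F(f)‖ / ‖(⟨f,ψ_j⟩)_j‖_{ℓ²} : f ∈ H₀, (⟨f,ψ_j⟩)_j ≠ 0} satisfying sec(θ_{TS})/√c₂ ≤ κ(F) ≤ sec(θ_{TS})/√c₁. -/

import Mathlib

/-!
Samples only see the orthogonal projection `P_S`, since `⟪ψ j, f⟫ = ⟪ψ j, P_S f⟫`; hence the frame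
inequalities read `√c₁ ‖P_S f‖ ≤ ‖f̂‖ ≤ √c₂ ‖P_S f‖` on all of `H`. For `f ∈ T ⊕ Sᗮ` the
difference `F f - f` has zero samples, so it lies in `Sᗮ` and `P_S (F f) = P_S f`; as `F f ∈ T`,
`cos θ_{TS} ‖F f‖ ≤ ‖P_S f‖ ≤ ‖f̂‖ / √c₁`, which is the upper bound. For the lower bound, test `κ`
on `t ∈ T`, where `F t = t`: `‖t‖ ≤ κ ‖t̂‖ ≤ κ √c₂ ‖P_S t‖`, so `sec θ_{TS} ≤ κ √c₂`. Dividing by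
`cos θ_{TS}` is legitimate because it is positive, by the open mapping theorem.
-/

open InnerProductSpace

/-- The cosine of the subspace angle between closed subspaces `A` and `B` of a Hilbert
space: `cos θ_{AB} = inf_{a ∈ A, ‖a‖ = 1} ‖P_B a‖`. -/
noncomputable def cosAngle {H : Type*} [NormedAddCommGroup H] [InnerProductSpace ℂ H]
    (A B : Submodule ℂ H) [B.HasOrthogonalProjection] : ℝ :=
  ⨅ a : {x : H // x ∈ A ∧ ‖x‖ = 1}, ‖((Submodule.orthogonalProjectionOnto B (a : H)) : H)‖

open scoped ComplexInnerProductSpace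

section

variable {H : Type*} [NormedAddCommGroup H] [InnerProductSpace ℂ H]

section CosAngle

variable {A B : Submodule ℂ H} [B.HasOrthogonalProjection]

theorem cosAngle_nonneg : 0 ≤ cosAngle A B :=
  Real.iInf_nonneg fun _ => norm_nonneg _

theorem cosAngle_bot : cosAngle ⊥ B = 0 := by
  have : IsEmpty {x : H // x ∈ (⊥ : Submodule ℂ H) ∧ ‖x‖ = 1} :=
    ⟨fun ⟨x, hx, hx1⟩ => by simp_all⟩
  exact Real.iInf_of_isEmpty _

theorem cosAngle_le {a : H} (ha : a ∈ A) (ha1 : ‖a‖ = 1) :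
    cosAngle A B ≤ ‖B.starProjection a‖ :=
  ciInf_le ⟨0, Set.forall_mem_range.2 fun _ => norm_nonneg _⟩
    (⟨a, ha, ha1⟩ : {x : H // x ∈ A ∧ ‖x‖ = 1})

theorem cosAngle_mul_norm_le {t : H} (ht : t ∈ A) :
    cosAngle A B * ‖t‖ ≤ ‖B.starProjection t‖ := by
  rcases eq_or_ne t 0 with rfl | ht0
  · simp
  have hle := cosAngle_le (B := B) (A.smul_mem (‖t‖⁻¹ : ℂ) ht) (norm_smul_inv_norm ht0)
  rwa [map_smul, norm_smul, norm_inv, Complex.norm_real, norm_norm, ← div_eq_inv_mul,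
    le_div_iff₀ (norm_pos_iff.mpr ht0)] at hle

theorem inv_le_cosAngle {K : ℝ} (hA : A ≠ ⊥) (hK : ∀ a ∈ A, ‖a‖ ≤ K * ‖B.starProjection a‖) :
    0 < K ∧ K⁻¹ ≤ cosAngle A B := by
  obtain ⟨a, ha, ha0⟩ := (Submodule.ne_bot_iff A).mp hA
  have hKpos : 0 < K :=
    pos_of_mul_pos_left ((norm_pos_iff.mpr ha0).trans_le (hK a ha)) (norm_nonneg _)
  have : Nonempty {x : H // x ∈ A ∧ ‖x‖ = 1} :=
    ⟨⟨_, A.smul_mem (‖a‖⁻¹ : ℂ) ha, norm_smul_inv_norm ha0⟩⟩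
  refine ⟨hKpos, le_ciInf fun x => ?_⟩
  rw [inv_le_iff_one_le_mul₀' hKpos]
  exact x.2.2.symm.trans_le (hK x x.2.1)

theorem cosAngle_pos_of_norm_le_mul {K : ℝ} (hA : A ≠ ⊥)
    (hK : ∀ a ∈ A, ‖a‖ ≤ K * ‖B.starProjection a‖) : 0 < cosAngle A B :=
  have h := inv_le_cosAngle hA hK
  (inv_pos.mpr h.1).trans_le h.2

theorem inv_cosAngle_le {K : ℝ} (hA : A ≠ ⊥) (hK : ∀ a ∈ A, ‖a‖ ≤ K * ‖B.starProjection a‖) :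
    (cosAngle A B)⁻¹ ≤ K :=
  have h := inv_le_cosAngle hA hK
  (inv_le_comm₀ h.1 (cosAngle_pos_of_norm_le_mul hA hK)).mp h.2

-- Open mapping: `P_B` restricted to `A` is injective with closed range `(A + Bᗮ) ∩ B`.
theorem exists_norm_le_mul_norm_starProjection [CompleteSpace H] [CompleteSpace A]
    (hmeet : A ⊓ Bᗮ = ⊥) (hsum : IsClosed ((A ⊔ Bᗮ : Submodule ℂ H) : Set H)) :
    ∃ K : ℝ, ∀ a ∈ A, ‖a‖ ≤ K * ‖B.starProjection a‖ := by
  set f : A →L[ℂ] H := B.starProjection ∘L A.subtypeL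
  have hinj : Function.Injective f := by
    refine (injective_iff_map_eq_zero f).mpr fun a ha => ?_
    have : (a : H) ∈ A ⊓ Bᗮ := ⟨a.2, B.starProjection_apply_eq_zero_iff.mp ha⟩
    rw [hmeet, Submodule.mem_bot] at this
    exact Subtype.ext this
  have hrange : Set.range f = ((A ⊔ Bᗮ : Submodule ℂ H) : Set H) ∩ B := by
    ext x
    constructor
    · rintro ⟨a, rfl⟩
      have hperp : (a : H) - B.starProjection a ∈ Bᗮ := B.sub_starProjection_mem_orthogonal a
      refine ⟨?_, (B.orthogonalProjectionOnto a).2⟩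
      simpa [f] using
        Submodule.sub_mem _ (Submodule.mem_sup_left a.2) (Submodule.mem_sup_right hperp)
    · rintro ⟨hx, hxB⟩
      obtain ⟨a, ha, s, hs, rfl⟩ := Submodule.mem_sup.mp hx
      refine ⟨⟨a, ha⟩, ?_⟩
      rw [← B.starProjection_eq_self_iff.mpr hxB, map_add,
        B.starProjection_apply_eq_zero_iff.mpr hs, add_zero]
      rfl
  have hB : IsClosed (B : Set H) := by
    simpa only [B.orthogonal_orthogonal] using Bᗮ.isClosed_orthogonal
  have hclosed : IsClosed (Set.range f) := hrange ▸ hsum.inter hB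
  obtain ⟨K, hK⟩ := f.antilipschitz_of_injective_of_isClosed_range hinj hclosed
  exact ⟨K, fun a ha => hK.le_mul_norm (map_zero f) ⟨a, ha⟩⟩

theorem cosAngle_pos [CompleteSpace H] [CompleteSpace A] (hA : A ≠ ⊥) (hmeet : A ⊓ Bᗮ = ⊥)
    (hsum : IsClosed ((A ⊔ Bᗮ : Submodule ℂ H) : Set H)) : 0 < cosAngle A B :=
  have ⟨_, hK⟩ := exists_norm_le_mul_norm_starProjection hmeet hsum
  cosAngle_pos_of_norm_le_mul hA hK

end CosAngle

section Sampling

variable {S : Submodule ℂ H} {ψ : ℕ → H}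

theorem mem_orthogonal_of_inner_eq_zero
    (hspan : (Submodule.span ℂ (Set.range ψ)).topologicalClosure = S) {x : H}
    (hx : ∀ j, ⟪ψ j, x⟫ = 0) : x ∈ Sᗮ := by
  rw [← hspan, Submodule.orthogonal_closure]
  have : Submodule.span ℂ (Set.range ψ) ⟂ Submodule.span ℂ {x} := by
    simpa using hx
  exact this.symm.le (Submodule.mem_span_singleton_self x)

variable [S.HasOrthogonalProjection]

theorem inner_starProjection_of_mem (hψS : ∀ j, ψ j ∈ S) (f : H) (j : ℕ) :
    ⟪ψ j, S.starProjection f⟫ = ⟪ψ j, f⟫ := by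
  rw [← S.inner_starProjection_left_eq_right, S.starProjection_eq_self_iff.mpr (hψS j)]

theorem sqrt_mul_norm_starProjection_le {c : ℝ} (hψS : ∀ j, ψ j ∈ S)
    (hlow : ∀ f ∈ S, c * ‖f‖ ^ 2 ≤ ∑' j, ‖⟪ψ j, f⟫‖ ^ 2) (f : H) :
    √c * ‖S.starProjection f‖ ≤ √(∑' j, ‖⟪ψ j, f⟫‖ ^ 2) := by
  rw [← Real.sqrt_sq (norm_nonneg _), ← Real.sqrt_mul' _ (sq_nonneg _)]
  refine Real.sqrt_le_sqrt ((hlow _ (S.starProjection_apply_mem f)).trans_eq ?_)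
  simp_rw [inner_starProjection_of_mem hψS]

theorem sqrt_tsum_le_sqrt_mul_norm_starProjection {c : ℝ} (hψS : ∀ j, ψ j ∈ S)
    (hup : ∀ f ∈ S, ∑' j, ‖⟪ψ j, f⟫‖ ^ 2 ≤ c * ‖f‖ ^ 2) (f : H) :
    √(∑' j, ‖⟪ψ j, f⟫‖ ^ 2) ≤ √c * ‖S.starProjection f‖ := by
  rw [← Real.sqrt_sq (norm_nonneg (S.starProjection f)), ← Real.sqrt_mul' _ (sq_nonneg _)]
  refine Real.sqrt_le_sqrt (le_of_eq_of_le ?_ (hup _ (S.starProjection_apply_mem f)))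
  simp_rw [inner_starProjection_of_mem hψS]

theorem sqrt_tsum_pos {c : ℝ} (hc : 0 < c) (hψS : ∀ j, ψ j ∈ S)
    (hlow : ∀ f ∈ S, c * ‖f‖ ^ 2 ≤ ∑' j, ‖⟪ψ j, f⟫‖ ^ 2) {f : H} (hf : ∃ j, ⟪ψ j, f⟫ ≠ 0) :
    0 < √(∑' j, ‖⟪ψ j, f⟫‖ ^ 2) := by
  obtain ⟨j, hj⟩ := hf
  have hPf : S.starProjection f ≠ 0 := fun h => hj <| by
    rw [← inner_starProjection_of_mem hψS, h, inner_zero_right]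
  exact (mul_pos (Real.sqrt_pos.mpr hc) (norm_pos_iff.mpr hPf)).trans_le
    (sqrt_mul_norm_starProjection_le hψS hlow f)

end Sampling

section ConsistentReconstruction

variable {S T : Submodule ℂ H} {ψ : ℕ → H} {F : H →ₗ[ℂ] H}

theorem sub_mem_orthogonal_of_consistent
    (hspan : (Submodule.span ℂ (Set.range ψ)).topologicalClosure = S)
    (hF : ∀ f ∈ T ⊔ Sᗮ, F f ∈ T ∧ ∀ j, ⟪ψ j, F f⟫ = ⟪ψ j, f⟫) {f : H} (hf : f ∈ T ⊔ Sᗮ) :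
    F f - f ∈ Sᗮ :=
  mem_orthogonal_of_inner_eq_zero hspan fun j => by rw [inner_sub_right, (hF f hf).2 j, sub_self]

theorem starProjection_eq_of_consistent [S.HasOrthogonalProjection]
    (hspan : (Submodule.span ℂ (Set.range ψ)).topologicalClosure = S)
    (hF : ∀ f ∈ T ⊔ Sᗮ, F f ∈ T ∧ ∀ j, ⟪ψ j, F f⟫ = ⟪ψ j, f⟫) {f : H} (hf : f ∈ T ⊔ Sᗮ) :
    S.starProjection (F f) = S.starProjection f := by
  rw [← sub_eq_zero, ← map_sub, S.starProjection_apply_eq_zero_iff]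
  exact sub_mem_orthogonal_of_consistent hspan hF hf

theorem eq_self_of_consistent (hspan : (Submodule.span ℂ (Set.range ψ)).topologicalClosure = S)
    (hmeet : T ⊓ Sᗮ = ⊥) (hF : ∀ f ∈ T ⊔ Sᗮ, F f ∈ T ∧ ∀ j, ⟪ψ j, F f⟫ = ⟪ψ j, f⟫) {t : H}
    (ht : t ∈ T) : F t = t := by
  have ht' : t ∈ T ⊔ Sᗮ := Submodule.mem_sup_left ht
  have : F t - t ∈ T ⊓ Sᗮ :=
    ⟨T.sub_mem (hF t ht').1 ht, sub_mem_orthogonal_of_consistent hspan hF ht'⟩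
  rwa [hmeet, Submodule.mem_bot, sub_eq_zero] at this

theorem exists_inner_ne_zero (hspan : (Submodule.span ℂ (Set.range ψ)).topologicalClosure = S)
    (hmeet : T ⊓ Sᗮ = ⊥) {t : H} (ht : t ∈ T) (ht0 : t ≠ 0) : ∃ j, ⟪ψ j, t⟫ ≠ 0 := by
  by_contra! h
  have : t ∈ T ⊓ Sᗮ := ⟨ht, mem_orthogonal_of_inner_eq_zero hspan h⟩
  rw [hmeet, Submodule.mem_bot] at this
  exact ht0 this

end ConsistentReconstruction

noncomputable def conditionNumber (ψ : ℕ → H) (S T : Submodule ℂ H) (F : H →ₗ[ℂ] H) : ℝ :=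
  ⨆ f : {f : H // f ∈ T ⊔ Sᗮ ∧ ∃ j, ⟪ψ j, (f : H)⟫ ≠ 0},
    ‖F (f : H)‖ / √(∑' j, ‖⟪ψ j, (f : H)⟫‖ ^ 2)

theorem conditionNumber_nonneg {ψ : ℕ → H} {S T : Submodule ℂ H} {F : H →ₗ[ℂ] H} :
    0 ≤ conditionNumber ψ S T F :=
  Real.iSup_nonneg fun _ => by positivity

section ConditionNumber

variable [CompleteSpace H] {S T : Submodule ℂ H} [S.HasOrthogonalProjection] [CompleteSpace T]
  {ψ : ℕ → H} {F : H →ₗ[ℂ] H}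

theorem norm_div_sqrt_tsum_le {c : ℝ} (hc : 0 < c) (hψS : ∀ j, ψ j ∈ S)
    (hlow : ∀ f ∈ S, c * ‖f‖ ^ 2 ≤ ∑' j, ‖⟪ψ j, f⟫‖ ^ 2)
    (hspan : (Submodule.span ℂ (Set.range ψ)).topologicalClosure = S)
    (hmeet : T ⊓ Sᗮ = ⊥) (hsum : IsClosed ((T ⊔ Sᗮ : Submodule ℂ H) : Set H))
    (hF : ∀ f ∈ T ⊔ Sᗮ, F f ∈ T ∧ ∀ j, ⟪ψ j, F f⟫ = ⟪ψ j, f⟫) {f : H} (hf : f ∈ T ⊔ Sᗮ)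
    (hsample : ∃ j, ⟪ψ j, f⟫ ≠ 0) :
    ‖F f‖ / √(∑' j, ‖⟪ψ j, f⟫‖ ^ 2) ≤ (cosAngle T S)⁻¹ / √c := by
  have hFf : F f ≠ 0 := by
    obtain ⟨j, hj⟩ := hsample
    exact fun h => hj (by rw [← (hF f hf).2 j, h, inner_zero_right])
  have hcos : 0 < cosAngle T S :=
    cosAngle_pos ((Submodule.ne_bot_iff T).mpr ⟨F f, (hF f hf).1, hFf⟩) hmeet hsum
  have hangle : cosAngle T S * ‖F f‖ ≤ ‖S.starProjection f‖ :=
    starProjection_eq_of_consistent hspan hF hf ▸ cosAngle_mul_norm_le (hF f hf).1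
  have hframe := sqrt_mul_norm_starProjection_le hψS hlow f
  rw [div_le_div_iff₀ (sqrt_tsum_pos hc hψS hlow hsample) (Real.sqrt_pos.mpr hc)]
  calc ‖F f‖ * √c = (cosAngle T S)⁻¹ * (√c * (cosAngle T S * ‖F f‖)) := by field_simp
    _ ≤ (cosAngle T S)⁻¹ * (√c * ‖S.starProjection f‖) := by gcongr
    _ ≤ (cosAngle T S)⁻¹ * √(∑' j, ‖⟪ψ j, f⟫‖ ^ 2) := by gcongr

theorem conditionNumber_le {c : ℝ} (hc : 0 < c) (hψS : ∀ j, ψ j ∈ S)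
    (hlow : ∀ f ∈ S, c * ‖f‖ ^ 2 ≤ ∑' j, ‖⟪ψ j, f⟫‖ ^ 2)
    (hspan : (Submodule.span ℂ (Set.range ψ)).topologicalClosure = S)
    (hmeet : T ⊓ Sᗮ = ⊥) (hsum : IsClosed ((T ⊔ Sᗮ : Submodule ℂ H) : Set H))
    (hF : ∀ f ∈ T ⊔ Sᗮ, F f ∈ T ∧ ∀ j, ⟪ψ j, F f⟫ = ⟪ψ j, f⟫) :
    conditionNumber ψ S T F ≤ (cosAngle T S)⁻¹ / √c :=
  Real.iSup_le (fun f => norm_div_sqrt_tsum_le hc hψS hlow hspan hmeet hsum hF f.2.1 f.2.2)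
    (div_nonneg (inv_nonneg.mpr cosAngle_nonneg) (Real.sqrt_nonneg c))

theorem inv_cosAngle_div_sqrt_le_conditionNumber {c₁ c₂ : ℝ} (hc₁ : 0 < c₁)
    (hψS : ∀ j, ψ j ∈ S) (hlow : ∀ f ∈ S, c₁ * ‖f‖ ^ 2 ≤ ∑' j, ‖⟪ψ j, f⟫‖ ^ 2)
    (hup : ∀ f ∈ S, ∑' j, ‖⟪ψ j, f⟫‖ ^ 2 ≤ c₂ * ‖f‖ ^ 2)
    (hspan : (Submodule.span ℂ (Set.range ψ)).topologicalClosure = S)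
    (hmeet : T ⊓ Sᗮ = ⊥) (hsum : IsClosed ((T ⊔ Sᗮ : Submodule ℂ H) : Set H))
    (hF : ∀ f ∈ T ⊔ Sᗮ, F f ∈ T ∧ ∀ j, ⟪ψ j, F f⟫ = ⟪ψ j, f⟫) :
    (cosAngle T S)⁻¹ / √c₂ ≤ conditionNumber ψ S T F := by
  rcases eq_or_ne T ⊥ with rfl | hT
  · rw [cosAngle_bot, inv_zero, zero_div]
    exact conditionNumber_nonneg
  have hbdd : BddAbove (Set.range fun f : {f : H // f ∈ T ⊔ Sᗮ ∧ ∃ j, ⟪ψ j, (f : H)⟫ ≠ 0} =>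
      ‖F (f : H)‖ / √(∑' j, ‖⟪ψ j, (f : H)⟫‖ ^ 2)) :=
    ⟨_, Set.forall_mem_range.mpr fun f =>
      norm_div_sqrt_tsum_le hc₁ hψS hlow hspan hmeet hsum hF f.2.1 f.2.2⟩
  refine div_le_of_le_mul₀ (Real.sqrt_nonneg _) conditionNumber_nonneg
    (inv_cosAngle_le hT fun t ht => ?_)
  rcases eq_or_ne t 0 with rfl | ht0
  · simp
  have hsample := exists_inner_ne_zero hspan hmeet ht ht0
  have hratio : ‖t‖ / √(∑' j, ‖⟪ψ j, t⟫‖ ^ 2) ≤ conditionNumber ψ S T F := by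
    have := le_ciSup hbdd ⟨t, Submodule.mem_sup_left ht, hsample⟩
    rwa [eq_self_of_consistent hspan hmeet hF ht] at this
  calc ‖t‖ ≤ conditionNumber ψ S T F * √(∑' j, ‖⟪ψ j, t⟫‖ ^ 2) :=
        (div_le_iff₀ (sqrt_tsum_pos hc₁ hψS hlow hsample)).mp hratio
    _ ≤ conditionNumber ψ S T F * (√c₂ * ‖S.starProjection t‖) :=
        mul_le_mul_of_nonneg_left (sqrt_tsum_le_sqrt_mul_norm_starProjection hψS hup t)
          conditionNumber_nonneg
    _ = conditionNumber ψ S T F * √c₂ * ‖S.starProjection t‖ := (mul_assoc _ _ _).symm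

end ConditionNumber

end

open scoped ComplexInnerProductSpace in
theorem consistent_reconstruction_condition_number_general
    {H : Type*} [NormedAddCommGroup H] [InnerProductSpace ℂ H] [CompleteSpace H]
    (S T : Submodule ℂ H) [CompleteSpace S] [CompleteSpace T]
    (ψ : ℕ → H) (hψS : ∀ j, ψ j ∈ S) (c₁ c₂ : ℝ) (hc₁ : 0 < c₁)
    (hframe : ∀ f ∈ S,
      c₁ * ‖f‖ ^ 2 ≤ ∑' j, ‖⟪ψ j, f⟫‖ ^ 2 ∧ ∑' j, ‖⟪ψ j, f⟫‖ ^ 2 ≤ c₂ * ‖f‖ ^ 2)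
    (hspan : (Submodule.span ℂ (Set.range ψ)).topologicalClosure = S)
    (hmeet : T ⊓ Sᗮ = ⊥) (hsum : IsClosed ((T ⊔ Sᗮ : Submodule ℂ H) : Set H))
    (F : H →ₗ[ℂ] H)
    (hF : ∀ f ∈ T ⊔ Sᗮ, F f ∈ T ∧ ∀ j, ⟪ψ j, F f⟫ = ⟪ψ j, f⟫) :
    (cosAngle T S)⁻¹ / Real.sqrt c₂ ≤
        (⨆ f : {f : H // f ∈ T ⊔ Sᗮ ∧ ∃ j, ⟪ψ j, (f : H)⟫ ≠ 0},
          ‖F (f : H)‖ / Real.sqrt (∑' j, ‖⟪ψ j, (f : H)⟫‖ ^ 2)) ∧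
      (⨆ f : {f : H // f ∈ T ⊔ Sᗮ ∧ ∃ j, ⟪ψ j, (f : H)⟫ ≠ 0},
          ‖F (f : H)‖ / Real.sqrt (∑' j, ‖⟪ψ j, (f : H)⟫‖ ^ 2)) ≤
        (cosAngle T S)⁻¹ / Real.sqrt c₁ := by
  have hlow : ∀ f ∈ S, c₁ * ‖f‖ ^ 2 ≤ ∑' j, ‖⟪ψ j, f⟫‖ ^ 2 := fun f hf => (hframe f hf).1
  have hup : ∀ f ∈ S, ∑' j, ‖⟪ψ j, f⟫‖ ^ 2 ≤ c₂ * ‖f‖ ^ 2 := fun f hf => (hframe f hf).2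
  exact ⟨inv_cosAngle_div_sqrt_le_conditionNumber hc₁ hψS hlow hup hspan hmeet hsum hF,
    conditionNumber_le hc₁ hψS hlow hspan hmeet hsum hF⟩

open scoped ComplexInnerProductSpace in
/-- Condition number of the consistent reconstruction `F = P_{T S^⊥}`:
`sec(θ_{TS})/√c₂ ≤ κ(F) ≤ sec(θ_{TS})/√c₁`. -/
theorem consistent_reconstruction_condition_number
    {H : Type*} [NormedAddCommGroup H] [InnerProductSpace ℂ H] [CompleteSpace H]
    (S T : Submodule ℂ H) [CompleteSpace S] [CompleteSpace T]
    (ψ : ℕ → H) (hψS : ∀ j, ψ j ∈ S) (c₁ c₂ : ℝ) (hc₁ : 0 < c₁) (hc : c₁ ≤ c₂)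
    (hframe : ∀ f ∈ S,
      c₁ * ‖f‖ ^ 2 ≤ ∑' j, ‖⟪ψ j, f⟫‖ ^ 2 ∧ ∑' j, ‖⟪ψ j, f⟫‖ ^ 2 ≤ c₂ * ‖f‖ ^ 2)
    (hspan : (Submodule.span ℂ (Set.range ψ)).topologicalClosure = S)
    (hmeet : T ⊓ Sᗮ = ⊥) (hsum : IsClosed ((T ⊔ Sᗮ : Submodule ℂ H) : Set H))
    (F : H →ₗ[ℂ] H)
    (hF : ∀ f ∈ T ⊔ Sᗮ, F f ∈ T ∧ ∀ j, ⟪ψ j, F f⟫ = ⟪ψ j, f⟫) :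
    (cosAngle T S)⁻¹ / Real.sqrt c₂ ≤
        (⨆ f : {f : H // f ∈ T ⊔ Sᗮ ∧ ∃ j, ⟪ψ j, (f : H)⟫ ≠ 0},
          ‖F (f : H)‖ / Real.sqrt (∑' j, ‖⟪ψ j, (f : H)⟫‖ ^ 2)) ∧
      (⨆ f : {f : H // f ∈ T ⊔ Sᗮ ∧ ∃ j, ⟪ψ j, (f : H)⟫ ≠ 0},
          ‖F (f : H)‖ / Real.sqrt (∑' j, ‖⟪ψ j, (f : H)⟫‖ ^ 2)) ≤
        (cosAngle T S)⁻¹ / Real.sqrt c₁ :=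
  consistent_reconstruction_condition_number_general S T ψ hψS c₁ c₂ hc₁ hframe hspan hmeet hsum F
    hF
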